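/- Let c ≥ 0, β ∈ ℝ, g > 0, and let J : ℝ → ℝ be continuous, strictly positive, and 2π-periodic. For every ε > 0 there exists λ₀ > 0 such that for every λ ∈ (0, λ₀) and every differentiable φ : ℝ → ℝ satisfying φ'(z) = λ h(φ(z)) + λ g R_λ(z) w(φ(z)) for all z ∈ ℝ and φ(0) = π, one has |φ(z) − π| < ε for all z ∈ [−π, π]. -/
import Mathlib


/-- The Heaviside step function. -/
noncomputable def Heav (z : ℝ) : ℝ := if z < 0 then 0 else 1

/-- The synaptic profile `r_λ(z)`, given by formula (3.10); on `(-π, π) \ {0}` (the only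
values relevant to the integrals below) it equals
`(1/2) e^{-(λz + (c/2)H(z))} [H(z) + (e^{2πλ + c/2} - 1)⁻¹]`. -/
noncomputable def rTheta (c lam z : ℝ) : ℝ :=
  (1 / 2) * Real.exp (-(lam * z + (c / 2) * Heav z)) *
    (Heav z + (Real.exp (2 * Real.pi * lam + c / 2) - 1)⁻¹)

/-- `R_λ(z) = ∫_{-π}^{π} J(z - y) r_λ(y) dy` (formula (3.13)). -/
noncomputable def RTheta (J : ℝ → ℝ) (c lam z : ℝ) : ℝ :=
  ∫ y in (-Real.pi)..Real.pi, J (z - y) * rTheta c lam y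

/-- `h(θ) = 1 - cos θ + β(1 + cos θ)`. -/
noncomputable def hTheta (β θ : ℝ) : ℝ := 1 - Real.cos θ + β * (1 + Real.cos θ)

/-- `w(θ) = 1 + cos θ`. -/
noncomputable def wTheta (θ : ℝ) : ℝ := 1 + Real.cos θ

/-- `ρ_c(λ) = (e^{2πλ} - 1)/(e^{2πλ + c/2} - 1)`. -/
noncomputable def rhoC (c lam : ℝ) : ℝ :=
  (Real.exp (2 * Real.pi * lam) - 1) / (Real.exp (2 * Real.pi * lam + c / 2) - 1)

/-- `f_{c,β}(λ) = (1 - 4βλ²)/(2λ ρ_c(λ))`. -/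
noncomputable def fCB (c β lam : ℝ) : ℝ := (1 - 4 * β * lam ^ 2) / (2 * lam * rhoC c lam)

lemma rw13_one_sub_cos_le_abs (u : ℝ) : 1 - Real.cos u ≤ |u| := by
  have h1 : |Real.sin (u/2)| ≤ |u/2| := Real.abs_sin_le_abs
  have h2 : |Real.sin (u/2)| ≤ 1 := Real.abs_sin_le_one _
  have h4 : Real.cos (u/2)^2 = 1/2 + Real.cos (2*(u/2))/2 := Real.cos_sq _
  have h5 : (2:ℝ)*(u/2) = u := by ring
  rw [h5] at h4
  have h3 : Real.sin (u/2)^2 + Real.cos (u/2)^2 = 1 := Real.sin_sq_add_cos_sq _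
  have h6 : |u/2| = |u|/2 := by rw [abs_div]; norm_num
  have h7 : Real.sin (u/2)^2 = |Real.sin (u/2)|^2 := (sq_abs _).symm
  nlinarith [abs_nonneg (Real.sin (u/2))]

set_option maxHeartbeats 1000000 in
/-- Lemma 5.1 (lemma `psiprop`): `Ψ(λ) → 0` as `λ → 0⁺`; more precisely, the solution of
the initial-value problem (3.18)-(3.19) satisfies `φ_λ(z) = π + O(λ)` uniformly on
`[-π, π]`: for every `ε > 0` there is `λ₀ > 0` such that `|φ_λ(z) - π| < ε` on `[-π, π]`
whenever `0 < λ < λ₀`. -/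
theorem rotating_waves_stmt_13 (c β g : ℝ) (hc : 0 ≤ c) (hg : 0 < g)
    (J : ℝ → ℝ) (hJcont : Continuous J) (hJpos : ∀ x : ℝ, 0 < J x)
    (hJper : ∀ x : ℝ, J (x + 2 * Real.pi) = J x)
    (ε : ℝ) (hε : 0 < ε) :
    ∃ lam₀ > (0 : ℝ), ∀ lam ∈ Set.Ioo (0 : ℝ) lam₀, ∀ φ : ℝ → ℝ,
      Differentiable ℝ φ →
      (∀ z : ℝ, deriv φ z
        = lam * hTheta β (φ z) + lam * g * RTheta J c lam z * wTheta (φ z)) →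
      φ 0 = Real.pi →
      ∀ z ∈ Set.Icc (-Real.pi) Real.pi, |φ z - Real.pi| < ε := by
  obtain ⟨M, hM⟩ := (isCompact_Icc :
      IsCompact (Set.Icc (-(2*Real.pi)) (2*Real.pi))).exists_bound_of_continuousOn
    hJcont.continuousOn
  have hπ := Real.pi_pos
  have hMpos : 0 < M := by
    have h0 : (0:ℝ) ∈ Set.Icc (-(2*Real.pi)) (2*Real.pi) := by
      constructor <;> nlinarith
    have hb := hM 0 h0
    rw [Real.norm_eq_abs] at hb
    linarith [le_abs_self (J 0), hJpos 0]
  set K : ℝ := g * (2*Real.pi*M*Real.exp Real.pi) with hKdef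
  have hK : 0 < K := by positivity
  set A : ℝ := 2 + 2*|β| with hAdef
  have hA : 0 < A := by positivity
  set C : ℝ := A / K * (Real.exp (K*Real.pi) - 1) with hCdef
  have hC : 0 ≤ C := by
    apply mul_nonneg (by positivity)
    have : (1:ℝ) ≤ Real.exp (K*Real.pi) := by
      rw [← Real.exp_zero]; exact Real.exp_le_exp.2 (by positivity)
    linarith
  refine ⟨min 1 (ε/(C+1)), lt_min one_pos (by positivity), ?_⟩
  rintro lam ⟨hlam0, hlamlt⟩ φ hφ hode hφ0
  have hlam1 : lam ≤ 1 := (hlamlt.trans_le (min_le_left _ _)).le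
  have hlamε : lam < ε/(C+1) := hlamlt.trans_le (min_le_right _ _)
  -- pointwise bound on rTheta
  have hrpos : ∀ y : ℝ, 0 ≤ rTheta c lam y := by
    intro y
    unfold rTheta Heav
    have h1 : (0:ℝ) ≤ if y < 0 then 0 else 1 := by positivity
    have h2 : (0:ℝ) ≤ (Real.exp (2 * Real.pi * lam + c / 2) - 1)⁻¹ := by
      apply inv_nonneg.2
      have : (1:ℝ) ≤ Real.exp (2 * Real.pi * lam + c / 2) := by
        rw [← Real.exp_zero]; exact Real.exp_le_exp.2 (by positivity)
      linarith
    positivity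
  have hrle : ∀ y ∈ Set.uIoc (-Real.pi) Real.pi, lam * rTheta c lam y ≤ Real.exp Real.pi := by
    intro y hy
    rw [Set.uIoc_of_le (by linarith)] at hy
    unfold rTheta Heav
    have hH0 : (0:ℝ) ≤ if y < 0 then 0 else 1 := by positivity
    have hH1 : (if y < 0 then (0:ℝ) else 1) ≤ 1 := by split <;> norm_num
    have hE : Real.exp (-(lam * y + c / 2 * if y < 0 then 0 else 1)) ≤ Real.exp Real.pi := by
      apply Real.exp_le_exp.2
      have h1 : -Real.pi ≤ y := hy.1.le
      have : -(lam*y) ≤ lam * Real.pi := by nlinarith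
      nlinarith
    have hinv : lam * (Real.exp (2 * Real.pi * lam + c / 2) - 1)⁻¹ ≤ 1 := by
      have h1 : 2*Real.pi*lam ≤ Real.exp (2 * Real.pi * lam + c / 2) - 1 := by
        have := Real.add_one_le_exp (2 * Real.pi * lam + c / 2)
        linarith
      have h2 : (0:ℝ) < 2*Real.pi*lam := by positivity
      have h3 : (Real.exp (2 * Real.pi * lam + c / 2) - 1)⁻¹ ≤ (2*Real.pi*lam)⁻¹ := by
        exact inv_anti₀ h2 h1
      calc lam * (Real.exp (2 * Real.pi * lam + c / 2) - 1)⁻¹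
          ≤ lam * (2*Real.pi*lam)⁻¹ := by
            exact mul_le_mul_of_nonneg_left h3 hlam0.le
        _ = (2*Real.pi)⁻¹ := by field_simp
        _ ≤ 1 := by rw [inv_le_one_iff₀]; right; nlinarith [Real.pi_gt_three]
    have hexp0 : (0:ℝ) < Real.exp (-(lam * y + c / 2 * if y < 0 then 0 else 1)) :=
      Real.exp_pos _
    have hsum : lam * ((if y < 0 then (0:ℝ) else 1)
        + (Real.exp (2 * Real.pi * lam + c / 2) - 1)⁻¹) ≤ 2 := by
      have : lam * (if y < 0 then (0:ℝ) else 1) ≤ 1 := by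
        nlinarith
      nlinarith
    have hinvnn : (0:ℝ) ≤ (Real.exp (2 * Real.pi * lam + c / 2) - 1)⁻¹ := by
      have := Real.add_one_le_exp (2 * Real.pi * lam + c / 2)
      have : (1:ℝ) ≤ Real.exp (2 * Real.pi * lam + c / 2) := by nlinarith [Real.pi_pos]
      have h := sub_nonneg.2 this
      exact inv_nonneg.2 h
    nlinarith [Real.exp_pos Real.pi]
  -- bound on RTheta
  have hRbound : ∀ z ∈ Set.Icc (-Real.pi) Real.pi,
      lam * |RTheta J c lam z| ≤ 2*Real.pi*M*Real.exp Real.pi := by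
    intro z hz
    have hnorm : ‖RTheta J c lam z‖ ≤ M * (Real.exp Real.pi / lam) * |Real.pi - (-Real.pi)| := by
      apply intervalIntegral.norm_integral_le_of_norm_le_const
      intro y hy
      have hy' := hy
      rw [Set.uIoc_of_le (by linarith)] at hy'
      have hJle : J (z - y) ≤ M := by
        have : z - y ∈ Set.Icc (-(2*Real.pi)) (2*Real.pi) := by
          constructor
          · have := hz.1; have := hy'.2; linarith
          · have := hz.2; have := hy'.1; linarith
        exact (le_abs_self _).trans (hM _ this)
      have hrle' : rTheta c lam y ≤ Real.exp Real.pi / lam := by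
        rw [le_div_iff₀ hlam0]
        calc rTheta c lam y * lam = lam * rTheta c lam y := by ring
          _ ≤ Real.exp Real.pi := hrle y hy
      rw [Real.norm_eq_abs, abs_mul, abs_of_pos (hJpos _), abs_of_nonneg (hrpos y)]
      exact mul_le_mul hJle hrle' (hrpos y) hMpos.le
    rw [Real.norm_eq_abs] at hnorm
    have h2 : |Real.pi - (-Real.pi)| = 2*Real.pi := by
      rw [abs_of_pos (by linarith)]; ring
    rw [h2] at hnorm
    calc lam * |RTheta J c lam z| ≤ lam * (M * (Real.exp Real.pi / lam) * (2*Real.pi)) :=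
          mul_le_mul_of_nonneg_left hnorm hlam0.le
      _ = 2*Real.pi*M*Real.exp Real.pi := by field_simp
  -- derivative bound
  have hderiv : ∀ z ∈ Set.Icc (-Real.pi) Real.pi,
      ‖deriv φ z‖ ≤ K * ‖φ z - Real.pi‖ + lam * A := by
    intro z hz
    rw [hode z, Real.norm_eq_abs, Real.norm_eq_abs]
    have hh : |hTheta β (φ z)| ≤ A := by
      unfold hTheta
      have h1 := Real.neg_one_le_cos (φ z)
      have h2 := Real.cos_le_one (φ z)
      have h3 : |β * (1 + Real.cos (φ z))| ≤ |β| * 2 := by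
        rw [abs_mul]
        apply mul_le_mul_of_nonneg_left _ (abs_nonneg β)
        rw [abs_le]; constructor <;> linarith
      have h4 : |1 - Real.cos (φ z)| ≤ 2 := by rw [abs_le]; constructor <;> linarith
      calc |1 - Real.cos (φ z) + β * (1 + Real.cos (φ z))|
          ≤ |1 - Real.cos (φ z)| + |β * (1 + Real.cos (φ z))| := abs_add_le _ _
        _ ≤ 2 + |β| * 2 := add_le_add h4 h3
        _ = A := by rw [hAdef]; ring
    have hw0 : 0 ≤ wTheta (φ z) := by
      unfold wTheta; have := Real.neg_one_le_cos (φ z); linarith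
    have hwle : wTheta (φ z) ≤ |φ z - Real.pi| := by
      unfold wTheta
      have : Real.cos (φ z) = -Real.cos (φ z - Real.pi) := by
        rw [← Real.cos_add_pi (φ z - Real.pi)]; ring_nf
      rw [this]
      have := rw13_one_sub_cos_le_abs (φ z - Real.pi)
      linarith
    have hterm2 : |lam * g * RTheta J c lam z * wTheta (φ z)| ≤ K * |φ z - Real.pi| := by
      rw [abs_mul, abs_mul, abs_mul, abs_of_pos hlam0, abs_of_pos hg,
        abs_of_nonneg hw0]
      calc lam * g * |RTheta J c lam z| * wTheta (φ z)
          ≤ g * (2*Real.pi*M*Real.exp Real.pi) * wTheta (φ z) := by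
            have := hRbound z hz
            have h1 : lam * g * |RTheta J c lam z| ≤ g * (2*Real.pi*M*Real.exp Real.pi) := by
              nlinarith [abs_nonneg (RTheta J c lam z)]
            exact mul_le_mul_of_nonneg_right h1 hw0
        _ ≤ K * |φ z - Real.pi| := by
            rw [hKdef]; exact mul_le_mul_of_nonneg_left hwle hK.le
    calc |lam * hTheta β (φ z) + lam * g * RTheta J c lam z * wTheta (φ z)|
        ≤ |lam * hTheta β (φ z)| + |lam * g * RTheta J c lam z * wTheta (φ z)| := abs_add_le _ _
      _ ≤ lam * A + K * |φ z - Real.pi| := by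
          refine add_le_add ?_ hterm2
          rw [abs_mul, abs_of_pos hlam0]
          exact mul_le_mul_of_nonneg_left hh hlam0.le
      _ = K * |φ z - Real.pi| + lam * A := by ring
  -- Gronwall bound evaluation
  have hgb : ∀ t ∈ Set.Icc (0:ℝ) Real.pi, gronwallBound 0 K (lam*A) t ≤ lam * C := by
    intro t ht
    rw [gronwallBound_of_K_ne_0 hK.ne']
    have hexp : Real.exp (K*t) ≤ Real.exp (K*Real.pi) :=
      Real.exp_le_exp.2 (mul_le_mul_of_nonneg_left ht.2 hK.le)
    have hexp1 : (1:ℝ) ≤ Real.exp (K*t) := by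
      rw [← Real.exp_zero]; exact Real.exp_le_exp.2 (mul_nonneg hK.le ht.1)
    have h1 : lam*A/K * (Real.exp (K*t) - 1) ≤ lam*A/K * (Real.exp (K*Real.pi) - 1) := by
      apply mul_le_mul_of_nonneg_left _ (by positivity)
      linarith
    calc (0:ℝ) * Real.exp (K*t) + lam*A/K * (Real.exp (K*t) - 1)
        = lam*A/K * (Real.exp (K*t) - 1) := by ring
      _ ≤ lam*A/K * (Real.exp (K*Real.pi) - 1) := h1
      _ = lam * C := by rw [hCdef]; ring
  -- forward Gronwall
  have hfwd : ∀ x ∈ Set.Icc (0:ℝ) Real.pi, ‖φ x - Real.pi‖ ≤ gronwallBound 0 K (lam*A) (x - 0) := by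
    apply norm_le_gronwallBound_of_norm_deriv_right_le
      (f' := deriv φ)
    · exact ((hφ.continuous.sub continuous_const).continuousOn)
    · intro x _
      exact ((hφ x).hasDerivAt.sub_const _).hasDerivWithinAt
    · rw [hφ0]; simp
    · intro x hx
      exact hderiv x ⟨by linarith [hx.1], hx.2.le⟩
  -- backward Gronwall
  have hbwd : ∀ x ∈ Set.Icc (0:ℝ) Real.pi,
      ‖φ (-x) - Real.pi‖ ≤ gronwallBound 0 K (lam*A) (x - 0) := by
    apply norm_le_gronwallBound_of_norm_deriv_right_le
      (f := fun t => φ (-t) - Real.pi) (f' := fun x => deriv φ (-x) * (-1))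
    · exact ((hφ.continuous.comp continuous_neg).sub continuous_const).continuousOn
    · intro x _
      exact (((hφ (-x)).hasDerivAt.comp x (hasDerivAt_neg x)).sub_const _).hasDerivWithinAt
    · simp [hφ0]
    · intro x hx
      have h1 : ‖deriv φ (-x) * (-1)‖ = ‖deriv φ (-x)‖ := by
        rw [norm_mul]; simp
      rw [h1]
      exact hderiv (-x) ⟨by linarith [hx.2.le], by linarith [hx.1]⟩
  -- conclusion
  have hfin : lam * C < ε := by
    have h1 : lam * (C+1) < ε := by
      rw [← lt_div_iff₀ (by positivity : (0:ℝ) < C + 1)] at *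
      exact hlamε
    nlinarith
  intro z hz
  rcases le_or_gt 0 z with h0 | h0
  · have := hfwd z ⟨h0, hz.2⟩
    rw [Real.norm_eq_abs] at this
    have := this.trans (hgb (z - 0) ⟨by linarith, by simpa using hz.2⟩)
    linarith
  · have hz' : -z ∈ Set.Icc (0:ℝ) Real.pi := ⟨by linarith, by linarith [hz.1]⟩
    have := hbwd (-z) hz'
    rw [Real.norm_eq_abs, neg_neg] at this
    have := this.trans (hgb (-z - 0) ⟨by linarith, by linarith [hz.1]⟩)
    linarith
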